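/- Let Λ(ξ) = |ξ|^p for p ≥ 2, and φ : ℝ → ℝ be C¹ nondecreasing. Define Ξ(w) = ∫₀^w √(Λ''(ξ) φ'(ξ)) dξ. Then for all a, b ∈ ℝ: (Λ'(b) − Λ'(a)) (φ(b) − φ(a)) ≥ (Ξ(b) − Ξ(a))². -/

import Mathlib

open MeasureTheory

lemma sv_cont_abs_rpow {q : ℝ} (hq : 0 ≤ q) : Continuous (fun x : ℝ => |x| ^ q) :=
  (Real.continuous_rpow_const hq).comp continuous_abs

lemma sv_hasDerivAt {p : ℝ} (hp : 2 ≤ p) (x : ℝ) :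
    HasDerivAt (fun x : ℝ => p * |x| ^ (p - 2) * x) (p * (p - 1) * |x| ^ (p - 2)) x := by
  have hq : (0:ℝ) ≤ p - 2 := by linarith
  rcases lt_trichotomy x 0 with hx | rfl | hx
  · -- x < 0
    have hx' : (0:ℝ) < -x := by linarith
    rw [abs_of_neg hx]
    have h2 : HasDerivAt (fun x : ℝ => (-x) ^ (p - 1)) ((p-1) * (-x) ^ (p - 2) * (-1)) x := by
      have := (Real.hasDerivAt_rpow_const (p := p - 1) (Or.inl hx'.ne')).comp x (hasDerivAt_neg x)
      refine this.congr_deriv ?_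
      · ring_nf
    have h1 : HasDerivAt (fun x : ℝ => -(p * (-x) ^ (p - 1))) (p * (p - 1) * (-x) ^ (p - 2)) x := by
      have := (h2.const_mul p).neg
      refine this.congr_deriv ?_
      ring
    refine h1.congr_of_eventuallyEq ?_
    filter_upwards [eventually_lt_nhds hx] with y hy
    rw [abs_of_neg hy, show p - 1 = (p - 2) + 1 by ring,
      Real.rpow_add_one (by linarith : (0:ℝ) < -y).ne']
    ring
  · -- x = 0
    rcases eq_or_lt_of_le hp with h2 | h2
    · -- p = 2
      have h0 : HasDerivAt (fun x : ℝ => p * x) (p * 1) 0 := (hasDerivAt_id 0).const_mul p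
      have h3 : HasDerivAt (fun x : ℝ => p * |x| ^ (p - 2) * x) (p * 1) 0 := by
        refine h0.congr_of_eventuallyEq (Filter.Eventually.of_forall fun y => ?_)
        simp [← h2]
      convert h3 using 1
      simp [← h2]
      norm_num
    · -- p > 2
      have hq' : (0:ℝ) < p - 2 := by linarith
      rw [hasDerivAt_iff_tendsto_slope]
      have ht : Filter.Tendsto (fun y : ℝ => p * |y| ^ (p - 2)) (nhdsWithin 0 {(0:ℝ)}ᶜ)
          (nhds (p * (p-1) * |(0:ℝ)| ^ (p-2))) := by
        have hc : ContinuousAt (fun y : ℝ => p * |y| ^ (p - 2)) 0 :=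
          (continuous_const.mul (sv_cont_abs_rpow hq)).continuousAt
        have := (hc.continuousWithinAt (s := {(0:ℝ)}ᶜ)).tendsto
        convert this using 2
        simp [Real.zero_rpow hq'.ne']
      refine ht.congr' ?_
      filter_upwards [self_mem_nhdsWithin] with y hy
      have hy0 : (y:ℝ) ≠ 0 := hy
      simp only [slope_def_field]
      rw [abs_zero, Real.zero_rpow hq'.ne']
      field_simp
      ring
  · rw [abs_of_pos hx]
    have h1 : HasDerivAt (fun x : ℝ => p * x ^ (p - 1)) (p * (p - 1) * x ^ (p - 2)) x := by
      have h2 := (Real.hasDerivAt_rpow_const (p := p - 1) (Or.inl hx.ne')).const_mul p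
      refine h2.congr_deriv ?_
      ring
    refine h1.congr_of_eventuallyEq ?_
    filter_upwards [eventually_gt_nhds hx] with y hy
    rw [abs_of_pos hy, show p - 1 = (p - 2) + 1 by ring, Real.rpow_add_one hy.ne']
    ring

lemma sv_deriv_nonneg {φ : ℝ → ℝ} (hφm : Monotone φ) {x : ℝ}
    (hd : DifferentiableAt ℝ φ x) : 0 ≤ deriv φ x := by
  have h := hasDerivAt_iff_tendsto_slope.1 hd.hasDerivAt
  refine ge_of_tendsto h ?_
  filter_upwards [self_mem_nhdsWithin] with y hy
  have hy0 : y ≠ x := hy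
  rw [slope_def_field]
  rcases lt_or_gt_of_ne hy0 with h1 | h1
  · exact div_nonneg_of_nonpos (by simpa using hφm h1.le) (by linarith)
  · exact div_nonneg (by simpa using hφm h1.le) (by linarith)

-- Cauchy-Schwarz for set integrals on Ioc with continuous nonneg functions
lemma sv_cs {a b : ℝ} (hab : a ≤ b) {g h : ℝ → ℝ} (hg : Continuous g) (hh : Continuous h)
    (hg0 : ∀ x, 0 ≤ g x) (hh0 : ∀ x, 0 ≤ h x) :
    (∫ x in Set.Ioc a b, Real.sqrt (g x * h x)) ^ 2
      ≤ (∫ x in Set.Ioc a b, g x) * ∫ x in Set.Ioc a b, h x := by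
  set μ := volume.restrict (Set.Ioc a b) with hμ
  have hfin : IsFiniteMeasure μ := by
    constructor
    rw [hμ, Measure.restrict_apply_univ, Real.volume_Ioc]
    exact ENNReal.ofReal_lt_top
  have hpq : Real.HolderConjugate 2 2 := Real.HolderConjugate.two_two
  have hmem : ∀ (f : ℝ → ℝ), Continuous f → MemLp f (ENNReal.ofReal 2) μ := by
    intro f hf
    obtain ⟨C, hC⟩ := (isCompact_Icc (a := a) (b := b)).exists_bound_of_continuousOn
      hf.continuousOn
    refine MemLp.of_bound hf.aestronglyMeasurable C ?_
    rw [hμ]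
    exact (ae_restrict_iff' measurableSet_Ioc).2
      (ae_of_all _ fun x hx => hC x (Set.Ioc_subset_Icc_self hx))
  have key := integral_mul_le_Lp_mul_Lq_of_nonneg (μ := μ) hpq
    (f := fun x => Real.sqrt (g x)) (g := fun x => Real.sqrt (h x))
    (ae_of_all _ fun x => Real.sqrt_nonneg _) (ae_of_all _ fun x => Real.sqrt_nonneg _)
    (hmem _ (hg.sqrt)) (hmem _ (hh.sqrt))
  have e1 : ∀ x, Real.sqrt (g x) * Real.sqrt (h x) = Real.sqrt (g x * h x) := fun x =>
    (Real.sqrt_mul (hg0 x) _).symm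
  have e2 : ∀ x, Real.sqrt (g x) ^ (2:ℝ) = g x := fun x => by
    rw [show ((2:ℝ)) = ((2:ℕ):ℝ) by norm_num, Real.rpow_natCast, Real.sq_sqrt (hg0 x)]
  have e3 : ∀ x, Real.sqrt (h x) ^ (2:ℝ) = h x := fun x => by
    rw [show ((2:ℝ)) = ((2:ℕ):ℝ) by norm_num, Real.rpow_natCast, Real.sq_sqrt (hh0 x)]
  simp only [e1, e2, e3] at key
  have hI0 : 0 ≤ ∫ x, Real.sqrt (g x * h x) ∂μ :=
    integral_nonneg fun x => Real.sqrt_nonneg _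
  have hg0' : 0 ≤ ∫ x, g x ∂μ := integral_nonneg hg0
  have hh0' : 0 ≤ ∫ x, h x ∂μ := integral_nonneg hh0
  calc (∫ x, Real.sqrt (g x * h x) ∂μ) ^ 2
      ≤ ((∫ x, g x ∂μ) ^ (1/(2:ℝ)) * (∫ x, h x ∂μ) ^ (1/(2:ℝ))) ^ 2 :=
        pow_le_pow_left₀ hI0 key 2
    _ = (∫ x, g x ∂μ) * ∫ x, h x ∂μ := by
        rw [mul_pow, ← Real.rpow_natCast ((∫ x, g x ∂μ) ^ (1/(2:ℝ))) 2,
          ← Real.rpow_natCast ((∫ x, h x ∂μ) ^ (1/(2:ℝ))) 2,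
          ← Real.rpow_mul hg0', ← Real.rpow_mul hh0']
        norm_num

lemma sv_main {p : ℝ} (hp : 2 ≤ p) {φ : ℝ → ℝ} (hφ : ContDiff ℝ 1 φ)
    (hφm : Monotone φ) {a b : ℝ} (hab : a ≤ b) :
    (p * |b| ^ (p - 2) * b - p * |a| ^ (p - 2) * a) * (φ b - φ a)
      ≥ ((∫ ξ in (0:ℝ)..b, Real.sqrt (p * (p - 1) * |ξ| ^ (p - 2) * deriv φ ξ))
          - ∫ ξ in (0:ℝ)..a, Real.sqrt (p * (p - 1) * |ξ| ^ (p - 2) * deriv φ ξ)) ^ 2 := by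
  have hq : (0:ℝ) ≤ p - 2 := by linarith
  have hd : Differentiable ℝ φ := hφ.differentiable one_ne_zero
  have hdc : Continuous (deriv φ) := hφ.continuous_deriv le_rfl
  have hdn : ∀ x, 0 ≤ deriv φ x := fun x => sv_deriv_nonneg hφm (hd x)
  set g : ℝ → ℝ := fun x => p * (p - 1) * |x| ^ (p - 2) with hgdef
  have hgc : Continuous g := continuous_const.mul (sv_cont_abs_rpow hq)
  have hgn : ∀ x, 0 ≤ g x := fun x => by
    have : (0:ℝ) ≤ p * (p - 1) := by nlinarith
    exact mul_nonneg this (Real.rpow_nonneg (abs_nonneg _) _)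
  set F : ℝ → ℝ := fun x => Real.sqrt (g x * deriv φ x) with hFdef
  have hFc : Continuous F := (hgc.mul hdc).sqrt
  -- rewrite the integrand
  have hInt : ∀ c : ℝ, (∫ ξ in (0:ℝ)..c, Real.sqrt (p * (p - 1) * |ξ| ^ (p - 2) * deriv φ ξ))
      = ∫ ξ in (0:ℝ)..c, F ξ := fun c => rfl
  rw [hInt, hInt]
  have hsub : (∫ ξ in (0:ℝ)..b, F ξ) - ∫ ξ in (0:ℝ)..a, F ξ = ∫ ξ in a..b, F ξ :=
    intervalIntegral.integral_interval_sub_left (hFc.intervalIntegrable 0 b)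
      (hFc.intervalIntegrable 0 a)
  rw [hsub]
  have hQ : p * |b| ^ (p - 2) * b - p * |a| ^ (p - 2) * a = ∫ x in a..b, g x :=
    (intervalIntegral.integral_eq_sub_of_hasDerivAt (fun x _ => sv_hasDerivAt hp x)
      (hgc.intervalIntegrable a b)).symm
  have hP : φ b - φ a = ∫ x in a..b, deriv φ x :=
    (intervalIntegral.integral_eq_sub_of_hasDerivAt (fun x _ => (hd x).hasDerivAt)
      (hdc.intervalIntegrable a b)).symm
  rw [hQ, hP, intervalIntegral.integral_of_le hab, intervalIntegral.integral_of_le hab,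
    intervalIntegral.integral_of_le hab]
  exact sv_cs hab hgc hdc hgn hdn

theorem stmt14 (p : ℝ) (hp : 2 ≤ p) (φ : ℝ → ℝ) (hφ : ContDiff ℝ 1 φ)
    (hφm : Monotone φ) (a b : ℝ) :
    (p * |b| ^ (p - 2) * b - p * |a| ^ (p - 2) * a) * (φ b - φ a)
      ≥ ((∫ ξ in (0:ℝ)..b, Real.sqrt (p * (p - 1) * |ξ| ^ (p - 2) * deriv φ ξ))
          - ∫ ξ in (0:ℝ)..a, Real.sqrt (p * (p - 1) * |ξ| ^ (p - 2) * deriv φ ξ)) ^ 2 := by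
  rcases le_total a b with hab | hab
  · exact sv_main hp hφ hφm hab
  · have h := sv_main hp hφ hφm hab
    nlinarith [h]
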